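/- Let p > 1. Then the function f(x) = sinh_p(x)/x is strictly increasing on (0, ∞), with f(x) → 1 as x → 0⁺ and f(x) → ∞ as x → ∞. In particular, for every k > 0, setting b = sinh_p(k)/k, one has x/arsinh_p(x) < sinh_p(x)/x < (b·x)/arsinh_p(b·x) for all x ∈ (0, k). -/

import Mathlib

/-!
Write `F = arsinhp p` and `φ t = (1 + t ^ p) ^ (-1 / p)`, so `φ` is strictly decreasing with
`φ 0 = 1`. Then `F u / u`, the mean of `φ` over `[0, u]`, is strictly decreasing, lies between
`φ u` and `1`, and is at most `(1 + log u) / u` for `u ≥ 1` because `φ t ≤ 1 / t`. Since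
`φ t ≥ 1 / (1 + t)`, also `F x ≥ log (1 + x)`, so `F` is an increasing bijection of `[0, ∞)`
and `sinhp p` is its inverse, with `x < sinhp p x` because `F x < x`. Writing
`sinhp p x / x = s / F s` with `s = sinhp p x`, every claim becomes a statement about the
monotonicity and the limits of `u / F u`; the two inequalities compare its values at
`x < sinhp p x < b * x`.
-/

open Real Set Filter Topology

/-- Generalized inverse sine: `arcsin_p x = ∫₀ˣ (1 - tᵖ)^(-1/p) dt`. -/
noncomputable def arcsinp (p : ℝ) (x : ℝ) : ℝ := ∫ t in (0:ℝ)..x, (1 - t ^ p) ^ (-1 / p)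

/-- Generalized π: `π_p = 2 · arcsin_p 1`. -/
noncomputable def pip (p : ℝ) : ℝ := 2 * arcsinp p 1

/-- Generalized sine: the inverse of `arcsinp p` (as a map from `[0,1]`). -/
noncomputable def sinp (p : ℝ) : ℝ → ℝ := Function.invFunOn (arcsinp p) (Set.Icc 0 1)

/-- Generalized cosine. -/
noncomputable def cosp (p : ℝ) (x : ℝ) : ℝ := (1 - (sinp p x) ^ p) ^ (1 / p)

/-- Generalized tangent. -/
noncomputable def tanp (p : ℝ) (x : ℝ) : ℝ := sinp p x / cosp p x

/-- Generalized inverse hyperbolic sine: `arsinh_p x = ∫₀ˣ (1 + tᵖ)^(-1/p) dt`. -/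
noncomputable def arsinhp (p : ℝ) (x : ℝ) : ℝ := ∫ t in (0:ℝ)..x, (1 + t ^ p) ^ (-1 / p)

/-- Generalized hyperbolic sine: the inverse of `arsinhp p` (as a map from `[0,∞)`). -/
noncomputable def sinhp (p : ℝ) : ℝ → ℝ := Function.invFunOn (arsinhp p) (Set.Ici 0)

/-- Generalized hyperbolic cosine. -/
noncomputable def coshp (p : ℝ) (x : ℝ) : ℝ := (1 + (sinhp p x) ^ p) ^ (1 / p)

/-- Generalized hyperbolic tangent. -/
noncomputable def tanhp (p : ℝ) (x : ℝ) : ℝ := sinhp p x / coshp p x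

open MeasureTheory

section AntitoneIntegral

variable {f : ℝ → ℝ} {a b : ℝ}

theorem AntitoneOn.intervalIntegrable_of_le (hf : AntitoneOn f (Icc a b)) (hab : a ≤ b) :
    IntervalIntegrable f volume a b :=
  (uIcc_of_le hab ▸ hf).intervalIntegrable

theorem AntitoneOn.integral_le_sub_mul (hf : AntitoneOn f (Icc a b)) (hab : a ≤ b) :
    ∫ x in a..b, f x ≤ (b - a) * f a := by
  simpa using intervalIntegral.integral_mono_on hab (hf.intervalIntegrable_of_le hab)
    intervalIntegrable_const fun x hx => hf ⟨le_rfl, hab⟩ hx hx.1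

theorem AntitoneOn.sub_mul_le_integral (hf : AntitoneOn f (Icc a b)) (hab : a ≤ b) :
    (b - a) * f b ≤ ∫ x in a..b, f x := by
  simpa using intervalIntegral.integral_mono_on hab intervalIntegrable_const
    (hf.intervalIntegrable_of_le hab) fun x hx => hf hx ⟨hab, le_rfl⟩ hx.2

theorem AntitoneOn.integral_add_adjacent_intervals {c : ℝ} (hf : AntitoneOn f (Icc a c))
    (hab : a ≤ b) (hbc : b ≤ c) :
    (∫ x in a..b, f x) + ∫ x in b..c, f x = ∫ x in a..c, f x :=
  intervalIntegral.integral_add_adjacent_intervals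
    ((hf.mono (Icc_subset_Icc_right hbc)).intervalIntegrable_of_le hab)
    ((hf.mono (Icc_subset_Icc_left hab)).intervalIntegrable_of_le hbc)

-- Splitting at an interior point makes the bound strict without any continuity of `f`.
theorem StrictAntiOn.integral_lt_sub_mul (hf : StrictAntiOn f (Icc a b)) (hab : a < b) :
    ∫ x in a..b, f x < (b - a) * f a := by
  obtain ⟨m, ham, hmb⟩ := exists_between hab
  have hl := (hf.antitoneOn.mono (Icc_subset_Icc_right hmb.le)).integral_le_sub_mul ham.le
  have hr := (hf.antitoneOn.mono (Icc_subset_Icc_left ham.le)).integral_le_sub_mul hmb.le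
  have hfm : f m < f a := hf ⟨le_rfl, hab.le⟩ ⟨ham.le, hmb.le⟩ ham
  rw [← hf.antitoneOn.integral_add_adjacent_intervals ham.le hmb.le]
  nlinarith

theorem StrictAntiOn.sub_mul_lt_integral (hf : StrictAntiOn f (Icc a b)) (hab : a < b) :
    (b - a) * f b < ∫ x in a..b, f x := by
  obtain ⟨m, ham, hmb⟩ := exists_between hab
  have hl := (hf.antitoneOn.mono (Icc_subset_Icc_right hmb.le)).sub_mul_le_integral ham.le
  have hr := (hf.antitoneOn.mono (Icc_subset_Icc_left ham.le)).sub_mul_le_integral hmb.le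
  have hfm : f b < f m := hf ⟨ham.le, hmb.le⟩ ⟨hab.le, le_rfl⟩ hmb
  rw [← hf.antitoneOn.integral_add_adjacent_intervals ham.le hmb.le]
  nlinarith

theorem StrictAntiOn.strictAntiOn_integral_div (hf : StrictAntiOn f (Ici 0)) :
    StrictAntiOn (fun x => (∫ t in (0 : ℝ)..x, f t) / x) (Ioi 0) := by
  intro a (ha : 0 < a) b (hb : 0 < b) hab
  have hhead := (hf.mono Icc_subset_Ici_self).sub_mul_lt_integral ha
  have htail := (hf.mono (Icc_subset_Ici_iff hab.le |>.2 ha.le)).integral_lt_sub_mul hab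
  have hsplit :=
    (hf.antitoneOn.mono Icc_subset_Ici_self).integral_add_adjacent_intervals ha.le hab.le
  rw [div_lt_div_iff₀ hb ha, ← hsplit]
  -- `a ∫₀ᵇ f < a ∫₀ᵃ f + a (b - a) f a < a ∫₀ᵃ f + (b - a) ∫₀ᵃ f`
  nlinarith

end AntitoneIntegral

noncomputable def arsinhpIntegrand (p t : ℝ) : ℝ := (1 + t ^ p) ^ (-1 / p)

section Integrand

variable {p t : ℝ}

theorem arsinhp_eq_integral (x : ℝ) :
    arsinhp p x = ∫ t in (0 : ℝ)..x, arsinhpIntegrand p t :=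
  rfl

theorem arsinhpIntegrand_eq_inv (ht : 0 ≤ t) :
    arsinhpIntegrand p t = ((1 + t ^ p) ^ (1 / p))⁻¹ := by
  rw [arsinhpIntegrand, neg_div, Real.rpow_neg (by positivity)]

theorem arsinhpIntegrand_pos (ht : 0 ≤ t) : 0 < arsinhpIntegrand p t := by
  rw [arsinhpIntegrand_eq_inv ht]; positivity

theorem arsinhpIntegrand_zero (hp : 0 < p) : arsinhpIntegrand p 0 = 1 := by
  simp [arsinhpIntegrand, Real.zero_rpow hp.ne']

theorem strictAntiOn_arsinhpIntegrand (hp : 0 < p) :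
    StrictAntiOn (arsinhpIntegrand p) (Ici 0) := by
  intro a (ha : 0 ≤ a) b (hb : 0 ≤ b) hab
  rw [arsinhpIntegrand_eq_inv ha, arsinhpIntegrand_eq_inv hb]
  gcongr

theorem continuousAt_arsinhpIntegrand_zero (hp : 0 < p) : ContinuousAt (arsinhpIntegrand p) 0 :=
  (continuousAt_const.add (Real.continuousAt_rpow_const 0 p (Or.inr hp.le))).rpow_const
    (Or.inl (by simp [Real.zero_rpow hp.ne']))

theorem arsinhpIntegrand_le_inv (hp : 0 < p) (ht : 0 < t) : arsinhpIntegrand p t ≤ t⁻¹ := by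
  rw [arsinhpIntegrand_eq_inv ht.le]
  have : t ≤ (1 + t ^ p) ^ (1 / p) := calc
    t = (t ^ p) ^ (1 / p) := by rw [one_div, Real.rpow_rpow_inv ht.le hp.ne']
    _ ≤ (1 + t ^ p) ^ (1 / p) := by gcongr; linarith
  gcongr

theorem inv_one_add_le_arsinhpIntegrand (hp : 1 ≤ p) (ht : 0 ≤ t) :
    (1 + t)⁻¹ ≤ arsinhpIntegrand p t := by
  rw [arsinhpIntegrand_eq_inv ht]
  have := Real.rpow_add_rpow_le_add zero_le_one ht hp
  rw [Real.one_rpow] at this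
  gcongr

end Integrand

section Arsinhp

variable {p x : ℝ}

theorem intervalIntegrable_arsinhpIntegrand (hp : 0 < p) {a b : ℝ} (ha : 0 ≤ a)
    (hab : a ≤ b) :
    IntervalIntegrable (arsinhpIntegrand p) volume a b :=
  ((strictAntiOn_arsinhpIntegrand hp).antitoneOn.mono (Icc_subset_Ici_iff hab |>.2 ha))
    |>.intervalIntegrable_of_le hab

theorem arsinhp_zero : arsinhp p 0 = 0 := intervalIntegral.integral_same

theorem arsinhp_lt_self (hp : 0 < p) (hx : 0 < x) : arsinhp p x < x := by
  have := ((strictAntiOn_arsinhpIntegrand hp).mono Icc_subset_Ici_self).integral_lt_sub_mul hx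
  rwa [arsinhpIntegrand_zero hp, sub_zero, mul_one] at this

theorem mul_arsinhpIntegrand_lt_arsinhp (hp : 0 < p) (hx : 0 < x) :
    x * arsinhpIntegrand p x < arsinhp p x := by
  rw [arsinhp_eq_integral]
  simpa using ((strictAntiOn_arsinhpIntegrand hp).mono Icc_subset_Ici_self).sub_mul_lt_integral hx

theorem arsinhp_pos (hp : 0 < p) (hx : 0 < x) : 0 < arsinhp p x :=
  (mul_pos hx (arsinhpIntegrand_pos hx.le)).trans (mul_arsinhpIntegrand_lt_arsinhp hp hx)

theorem arsinhp_add_integral (hp : 0 < p) {a b : ℝ} (ha : 0 ≤ a) (hab : a ≤ b) :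
    arsinhp p a + ∫ t in a..b, arsinhpIntegrand p t = arsinhp p b :=
  intervalIntegral.integral_add_adjacent_intervals
    (intervalIntegrable_arsinhpIntegrand hp le_rfl ha)
    (intervalIntegrable_arsinhpIntegrand hp ha hab)

theorem strictMonoOn_arsinhp (hp : 0 < p) : StrictMonoOn (arsinhp p) (Ici 0) := by
  intro a (ha : 0 ≤ a) b (hb : 0 ≤ b) hab
  have htail := ((strictAntiOn_arsinhpIntegrand hp).mono (Icc_subset_Ici_iff hab.le |>.2 ha))
    |>.sub_mul_lt_integral hab
  have hpos := mul_pos (sub_pos.2 hab) (arsinhpIntegrand_pos (p := p) hb)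
  rw [← arsinhp_add_integral hp ha hab.le]
  linarith

theorem continuousOn_arsinhp (hp : 0 < p) {X : ℝ} (hX : 0 ≤ X) :
    ContinuousOn (arsinhp p) (Icc 0 X) := by
  have h := intervalIntegral.continuousOn_primitive_interval'
    (intervalIntegrable_arsinhpIntegrand hp le_rfl hX) left_mem_uIcc
  rw [uIcc_of_le hX] at h
  exact h

theorem log_one_add_le_arsinhp (hp : 1 ≤ p) (hx : 0 ≤ x) : log (1 + x) ≤ arsinhp p x := by
  have hint : IntervalIntegrable (fun t => (1 + t)⁻¹) volume 0 x := by
    refine ContinuousOn.intervalIntegrable ((continuousOn_const.add continuousOn_id).inv₀ ?_)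
    intro t ht
    rw [uIcc_of_le hx] at ht
    exact (add_pos_of_pos_of_nonneg one_pos ht.1).ne'
  calc log (1 + x) = ∫ t in (0 : ℝ)..x, (1 + t)⁻¹ := by
        rw [intervalIntegral.integral_comp_add_left (fun t => t⁻¹),
          integral_inv (notMem_uIcc_of_lt (by norm_num) (by linarith))]
        simp
    _ ≤ arsinhp p x := intervalIntegral.integral_mono_on hx hint
        (intervalIntegrable_arsinhpIntegrand (by linarith) le_rfl hx)
        fun t ht => inv_one_add_le_arsinhpIntegrand hp ht.1

theorem arsinhp_le_one_add_log (hp : 0 < p) (hx : 1 ≤ x) : arsinhp p x ≤ 1 + log x := by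
  have h0 : (0 : ℝ) ∉ uIcc 1 x := notMem_uIcc_of_lt one_pos (by linarith)
  have htail : ∫ t in (1 : ℝ)..x, arsinhpIntegrand p t ≤ log x := calc
    _ ≤ ∫ t in (1 : ℝ)..x, t⁻¹ := intervalIntegral.integral_mono_on hx
        (intervalIntegrable_arsinhpIntegrand hp zero_le_one hx)
        (intervalIntegrable_inv_iff.2 (.inr h0))
        fun t ht => arsinhpIntegrand_le_inv hp (one_pos.trans_le ht.1)
    _ = log x := by rw [integral_inv h0, div_one]
  rw [← arsinhp_add_integral hp zero_le_one hx]
  linarith [arsinhp_lt_self hp one_pos]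

end Arsinhp

section Ratio

variable {p : ℝ}

theorem strictMonoOn_div_arsinhp (hp : 0 < p) :
    StrictMonoOn (fun u => u / arsinhp p u) (Ioi 0) := by
  intro a (ha : 0 < a) b (hb : 0 < b) hab
  have : arsinhp p b / b < arsinhp p a / a :=
    (strictAntiOn_arsinhpIntegrand hp).strictAntiOn_integral_div ha hb hab
  rw [← inv_lt_inv₀ (div_pos (arsinhp_pos hp ha) ha) (div_pos (arsinhp_pos hp hb) hb)] at this
  simpa only [inv_div] using this

theorem tendsto_div_arsinhp_nhdsGT_zero (hp : 0 < p) :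
    Tendsto (fun u => u / arsinhp p u) (𝓝[>] 0) (𝓝 1) := by
  have hlow : Tendsto (arsinhpIntegrand p) (𝓝[>] 0) (𝓝 1) :=
    arsinhpIntegrand_zero hp ▸ (continuousAt_arsinhpIntegrand_zero hp).tendsto.mono_left
      nhdsWithin_le_nhds
  have : Tendsto (fun u => arsinhp p u / u) (𝓝[>] 0) (𝓝 1) := by
    refine tendsto_of_tendsto_of_tendsto_of_le_of_le' hlow tendsto_const_nhds ?_ ?_ <;>
      filter_upwards [self_mem_nhdsWithin] with u (hu : 0 < u)
    · rw [le_div_iff₀ hu, mul_comm]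
      exact (mul_arsinhpIntegrand_lt_arsinhp hp hu).le
    · rw [div_le_one hu]
      exact (arsinhp_lt_self hp hu).le
  simpa using this.inv₀ one_ne_zero

theorem tendsto_div_arsinhp_atTop (hp : 0 < p) :
    Tendsto (fun u => u / arsinhp p u) atTop atTop := by
  have hup : Tendsto (fun u => (1 + log u) / u) atTop (𝓝 0) := by
    simpa [add_div] using
      tendsto_inv_atTop_zero.add Real.isLittleO_log_id_atTop.tendsto_div_nhds_zero
  have hpos : ∀ᶠ u in atTop, 0 < arsinhp p u / u := by
    filter_upwards [eventually_gt_atTop 0] with u hu using div_pos (arsinhp_pos hp hu) hu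
  have : Tendsto (fun u => arsinhp p u / u) atTop (𝓝 0) := by
    refine tendsto_of_tendsto_of_tendsto_of_le_of_le' tendsto_const_nhds hup
      (hpos.mono fun _ => le_of_lt) ?_
    filter_upwards [eventually_ge_atTop 1] with u hu
    exact div_le_div_of_nonneg_right (arsinhp_le_one_add_log hp hu) (zero_le_one.trans hu)
  simpa only [Pi.inv_def, inv_div] using
    (tendsto_nhdsWithin_iff.2 ⟨this, hpos⟩).inv_tendsto_nhdsGT_zero

end Ratio

section Sinhp

variable {p x y : ℝ}

theorem surjOn_arsinhp (hp : 1 ≤ p) : SurjOn (arsinhp p) (Ici 0) (Ici 0) := by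
  intro y (hy : 0 ≤ y)
  have hX : 0 ≤ exp y - 1 := by linarith [one_le_exp hy]
  have hyX : y ≤ arsinhp p (exp y - 1) := by
    simpa using log_one_add_le_arsinhp hp hX
  obtain ⟨x, hx, rfl⟩ := intermediate_value_Icc hX (continuousOn_arsinhp (by linarith) hX)
    ⟨by rwa [arsinhp_zero], hyX⟩
  exact ⟨x, hx.1, rfl⟩

theorem arsinhp_sinhp (hp : 1 ≤ p) (hy : 0 ≤ y) : arsinhp p (sinhp p y) = y :=
  (surjOn_arsinhp hp).rightInvOn_invFunOn hy

theorem sinhp_nonneg (hp : 1 ≤ p) (hy : 0 ≤ y) : 0 ≤ sinhp p y :=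
  (surjOn_arsinhp hp).mapsTo_invFunOn hy

theorem lt_sinhp_iff (hp : 1 ≤ p) (hx : 0 ≤ x) (hy : 0 ≤ y) :
    x < sinhp p y ↔ arsinhp p x < y := by
  conv_rhs => rw [← arsinhp_sinhp hp hy]
  exact ((strictMonoOn_arsinhp (by linarith)).lt_iff_lt hx (sinhp_nonneg hp hy)).symm

theorem self_lt_sinhp (hp : 1 ≤ p) (hx : 0 < x) : x < sinhp p x :=
  (lt_sinhp_iff hp hx.le hx.le).2 (arsinhp_lt_self (by linarith) hx)

theorem sinhp_pos (hp : 1 ≤ p) (hx : 0 < x) : 0 < sinhp p x :=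
  hx.trans (self_lt_sinhp hp hx)

theorem strictMonoOn_sinhp (hp : 1 ≤ p) : StrictMonoOn (sinhp p) (Ici 0) := by
  intro a (ha : 0 ≤ a) b (hb : 0 ≤ b) hab
  rwa [lt_sinhp_iff hp (sinhp_nonneg hp ha) hb, arsinhp_sinhp hp ha]

theorem sinhp_le_exp_sub_one (hp : 1 ≤ p) (hy : 0 ≤ y) : sinhp p y ≤ exp y - 1 := by
  have := log_one_add_le_arsinhp hp (sinhp_nonneg hp hy)
  rw [arsinhp_sinhp hp hy, log_le_iff_le_exp (by linarith [sinhp_nonneg hp hy])] at this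
  linarith

theorem tendsto_sinhp_nhdsGT_zero (hp : 1 ≤ p) : Tendsto (sinhp p) (𝓝[>] 0) (𝓝[>] 0) := by
  have hup : Tendsto (fun y => exp y - 1) (𝓝[>] 0) (𝓝 0) := by
    simpa using ((continuous_exp.tendsto 0).sub_const 1).mono_left nhdsWithin_le_nhds
  refine tendsto_nhdsWithin_iff.2 ⟨?_, ?_⟩
  · refine tendsto_of_tendsto_of_tendsto_of_le_of_le' tendsto_const_nhds hup ?_ ?_ <;>
      filter_upwards [self_mem_nhdsWithin] with y (hy : 0 < y)
    exacts [sinhp_nonneg hp hy.le, sinhp_le_exp_sub_one hp hy.le]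
  · filter_upwards [self_mem_nhdsWithin] with y (hy : 0 < y) using sinhp_pos hp hy

theorem tendsto_sinhp_atTop (hp : 1 ≤ p) : Tendsto (sinhp p) atTop atTop :=
  tendsto_atTop_mono' atTop ((eventually_gt_atTop 0).mono fun _ hy => (self_lt_sinhp hp hy).le)
    tendsto_id

theorem sinhp_div_self_eq (hp : 1 ≤ p) (hx : 0 ≤ x) :
    sinhp p x / x = sinhp p x / arsinhp p (sinhp p x) := by
  rw [arsinhp_sinhp hp hx]

theorem strictMonoOn_sinhp_div_self (hp : 1 ≤ p) :
    StrictMonoOn (fun x => sinhp p x / x) (Ioi 0) := by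
  intro a (ha : 0 < a) b (hb : 0 < b) hab
  simp only [sinhp_div_self_eq hp ha.le, sinhp_div_self_eq hp hb.le]
  exact strictMonoOn_div_arsinhp (by linarith) (sinhp_pos hp ha) (sinhp_pos hp hb)
    (strictMonoOn_sinhp hp ha.le hb.le hab)

theorem tendsto_sinhp_div_self_nhdsGT_zero (hp : 1 ≤ p) :
    Tendsto (fun x => sinhp p x / x) (𝓝[>] 0) (𝓝 1) := by
  refine ((tendsto_div_arsinhp_nhdsGT_zero (by linarith)).comp
    (tendsto_sinhp_nhdsGT_zero hp)).congr' ?_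
  filter_upwards [self_mem_nhdsWithin] with x (hx : 0 < x)
  exact (sinhp_div_self_eq hp hx.le).symm

theorem tendsto_sinhp_div_self_atTop (hp : 1 ≤ p) :
    Tendsto (fun x => sinhp p x / x) atTop atTop := by
  refine ((tendsto_div_arsinhp_atTop (by linarith)).comp (tendsto_sinhp_atTop hp)).congr' ?_
  filter_upwards [eventually_ge_atTop 0] with x hx
  exact (sinhp_div_self_eq hp hx).symm

end Sinhp

theorem stmt17 (p : ℝ) (hp : 1 < p) :
    StrictMonoOn (fun x => sinhp p x / x) (Set.Ioi 0) ∧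
    Tendsto (fun x => sinhp p x / x) (𝓝[>] 0) (𝓝 1) ∧
    Tendsto (fun x => sinhp p x / x) atTop atTop ∧
    ∀ k > (0:ℝ), ∀ x ∈ Set.Ioo 0 k,
      x / arsinhp p x < sinhp p x / x ∧
      sinhp p x / x < (sinhp p k / k) * x / arsinhp p ((sinhp p k / k) * x) := by
  have hp₀ : 0 < p := by linarith
  refine ⟨strictMonoOn_sinhp_div_self hp.le, tendsto_sinhp_div_self_nhdsGT_zero hp.le,
    tendsto_sinhp_div_self_atTop hp.le, fun k _ x ⟨hx, hxk⟩ => ⟨?_, ?_⟩⟩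
  · rw [sinhp_div_self_eq hp.le hx.le]
    exact strictMonoOn_div_arsinhp hp₀ hx (sinhp_pos hp.le hx) (self_lt_sinhp hp.le hx)
  · have hlt : sinhp p x < sinhp p k / k * x :=
      (div_lt_iff₀ hx).1 (strictMonoOn_sinhp_div_self hp.le hx (hx.trans hxk) hxk)
    rw [sinhp_div_self_eq hp.le hx.le]
    exact strictMonoOn_div_arsinhp hp₀ (sinhp_pos hp.le hx) ((sinhp_pos hp.le hx).trans hlt) hlt
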